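/- arXiv:1908.05654 — 2 statements merged into one kernel-verified Lean document; each statement's English description precedes it below -/
import Mathlib

section
/- The Neumann heat kernel satisfies the Chapman–Kolmogorov equation: for all s, t > 0 and all x, y ∈ [0,1], ∫_0^1 p(s,x,z) p(t,z,y) dz = p(s+t,x,y). -/
/-!
Method of images: `heatK t` is `neumannKernel f` for the Gaussian density `f` of variance `t`.
If `h` is even and `2`-periodic, the reflections `z ↦ ±z + 2n` map `(0, 1]` onto a tiling of `ℝ`,
so `∫₀¹ neumannKernel f x z * h z dz = ∫_ℝ f (x - w) * h w dw`. For `h = neumannKernel g · y`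
with `g` even this is `neumannKernel (f ⋆ g) x y`, and the convolution of the centered
Gaussians of variances `s` and `t` is the one of variance `s + t`. Working with `ℝ≥0∞`-valued
integrals makes every exchange of sums and integrals free; the only analytic input is the
convergence of the image series.
-/

open MeasureTheory Real

/-- Centered Gaussian density with variance `t`. -/
noncomputable def gaussD (t x : ℝ) : ℝ :=
  (2 * Real.pi * t) ^ (-(1:ℝ)/2) * Real.exp (-x ^ 2 / (2 * t))

/-- The Neumann heat kernel on `[0,1]` (transition density of reflected BM). -/
noncomputable def heatK (t x y : ℝ) : ℝ :=
  ∑' n : ℤ, (gaussD t (x - y + 2 * (n : ℝ)) + gaussD t (x + y + 2 * (n : ℝ)))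

open ProbabilityTheory Set
open scoped ENNReal NNReal

namespace ProbabilityTheory

theorem gaussianPDF_zero_neg (v : ℝ≥0) (x : ℝ) : gaussianPDF 0 v (-x) = gaussianPDF 0 v x := by
  simp [gaussianPDF, gaussianPDFReal]

theorem summable_gaussianPDFReal_add_mul_intCast (μ : ℝ) {v : ℝ≥0} (hv : v ≠ 0) (b : ℝ) {a : ℝ}
    (ha : a ≠ 0) : Summable fun n : ℤ => gaussianPDFReal μ v (b + a * n) := by
  have hv' : (0 : ℝ) < v := by positivity
  set c := b - μ
  have hτ : 0 < (Complex.I * ((a ^ 2 / (2 * π * v) : ℝ) : ℂ)).im := by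
    simp only [Complex.I_mul_im, Complex.ofReal_re]; positivity
  -- up to a constant factor, the summand is the norm of a Jacobi theta term
  have hθ :=
    ((summable_jacobiTheta₂_term_iff (Complex.I * ((a * c / (2 * π * v) : ℝ) : ℂ)) _).2 hτ).norm
  refine (hθ.mul_left ((√(2 * π * v))⁻¹ * rexp (-c ^ 2 / (2 * v)))).congr fun n => ?_
  rw [norm_jacobiTheta₂_term, gaussianPDFReal, mul_assoc, ← Real.exp_add]
  congr 2
  simp only [Complex.mul_im, Complex.I_re, Complex.I_im, Complex.ofReal_re, Complex.ofReal_im]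
  field_simp
  ring

theorem gaussianPDFReal_mul_gaussianPDFReal_sub (μ₁ μ₂ : ℝ) {s t : ℝ≥0} (hs : s ≠ 0) (ht : t ≠ 0)
    (x u : ℝ) :
    gaussianPDFReal μ₁ s u * gaussianPDFReal μ₂ t (x - u) =
      gaussianPDFReal (μ₁ + μ₂) (s + t) x *
        gaussianPDFReal ((t * μ₁ + s * (x - μ₂)) / (s + t)) (s * t / (s + t)) u := by
  have hs' : (0 : ℝ) < s := by positivity
  have ht' : (0 : ℝ) < t := by positivity
  simp only [gaussianPDFReal, NNReal.coe_add, NNReal.coe_div, NNReal.coe_mul]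
  rw [mul_mul_mul_comm, ← Real.exp_add, mul_mul_mul_comm, ← Real.exp_add, ← mul_inv, ← mul_inv,
    ← Real.sqrt_mul (by positivity), ← Real.sqrt_mul (by positivity)]
  congr 1
  · congr 2
    field_simp
  · congr 1
    field_simp
    ring

theorem gaussianPDF_lconvolution_gaussianPDF (μ₁ μ₂ : ℝ) {s t : ℝ≥0} (hs : s ≠ 0) (ht : t ≠ 0) :
    gaussianPDF μ₁ s ⋆ₗ gaussianPDF μ₂ t = gaussianPDF (μ₁ + μ₂) (s + t) := by
  ext x
  have hst : s * t / (s + t) ≠ 0 := by positivity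
  simp_rw [lconvolution_def, neg_add_eq_sub, gaussianPDF,
    ← ENNReal.ofReal_mul (gaussianPDFReal_nonneg _ _ _),
    gaussianPDFReal_mul_gaussianPDFReal_sub μ₁ μ₂ hs ht,
    ENNReal.ofReal_mul (gaussianPDFReal_nonneg _ _ _)]
  rw [lintegral_const_mul _ (measurable_gaussianPDFReal _ _).ennreal_ofReal,
    lintegral_gaussianPDFReal_eq_one _ hst, mul_one]

end ProbabilityTheory

theorem lintegral_eq_tsum_setLIntegral_Ioc_add_mul {p : ℝ} (hp : 0 < p) (a : ℝ)
    (F : ℝ → ℝ≥0∞) : ∫⁻ w, F w = ∑' n : ℤ, ∫⁻ z in Ioc a (a + p), F (z + n * p) := by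
  rw [← setLIntegral_univ, ← iUnion_Ioc_add_zsmul hp a,
    lintegral_iUnion (fun _ => measurableSet_Ioc) (pairwise_disjoint_Ioc_add_zsmul a p)]
  refine tsum_congr fun n => ?_
  rw [← (measurePreserving_add_right volume (n * p)).setLIntegral_comp_preimage_emb
    (measurableEmbedding_addRight _), preimage_add_const_Ioc]
  congr 2
  simp only [zsmul_eq_mul, Int.cast_add, Int.cast_one]
  ring_nf

theorem setLIntegral_Ioc_neg_self_eq_setLIntegral_Ioc_zero {G : ℝ → ℝ≥0∞}
    (hG : Measurable G) {a : ℝ} (ha : 0 ≤ a) :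
    ∫⁻ z in Ioc (-a) a, G z = ∫⁻ z in Ioc 0 a, (G z + G (-z)) := by
  have h_neg : ∫⁻ z in Ioc (-a) 0, G z = ∫⁻ z in Ioc 0 a, G (-z) := by
    rw [← (Measure.measurePreserving_neg volume).setLIntegral_comp_preimage_emb
      (measurableEmbedding_neg)]
    simp only [neg_preimage, neg_Ioc, neg_zero, neg_neg]
    exact setLIntegral_congr Ico_ae_eq_Ioc
  rw [← Ioc_union_Ioc_eq_Ioc (neg_nonpos.2 ha) ha, lintegral_union measurableSet_Ioc
    (Ioc_disjoint_Ioc_of_le le_rfl), h_neg, lintegral_add_left hG, add_comm]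

noncomputable def neumannKernel (f : ℝ → ℝ≥0∞) (x y : ℝ) : ℝ≥0∞ :=
  ∑' n : ℤ, (f (x - y + 2 * n) + f (x + y + 2 * n))

namespace neumannKernel

variable {f g : ℝ → ℝ≥0∞}

theorem measurable_left (hf : Measurable f) (y : ℝ) : Measurable (neumannKernel f · y) :=
  Measurable.tsum fun _ => (hf.comp (by fun_prop)).add (hf.comp (by fun_prop))

theorem measurable_right (hf : Measurable f) (x : ℝ) : Measurable (neumannKernel f x) :=
  Measurable.tsum fun _ => (hf.comp (by fun_prop)).add (hf.comp (by fun_prop))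

theorem periodic_left (f : ℝ → ℝ≥0∞) (y : ℝ) : Function.Periodic (neumannKernel f · y) 2 := by
  intro x
  simp only [neumannKernel]
  conv_rhs => rw [← (Equiv.addRight 1).tsum_eq]
  refine tsum_congr fun n => ?_
  simp only [Equiv.coe_addRight, Int.cast_add, Int.cast_one]
  ring_nf

theorem neg_left (hf : ∀ x, f (-x) = f x) (x y : ℝ) :
    neumannKernel f (-x) y = neumannKernel f x y := by
  rw [neumannKernel, ← (Equiv.neg ℤ).tsum_eq]
  refine tsum_congr fun n => ?_
  rw [add_comm, ← hf (x - y + _), ← hf (x + y + _)]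
  congr 2 <;> simp only [Equiv.neg_apply, Int.cast_neg] <;> ring

theorem setLIntegral_Ioc_mul (hf : Measurable f) {h : ℝ → ℝ≥0∞} (hh : Measurable h)
    (h_even : ∀ z, h (-z) = h z) (h_per : Function.Periodic h 2) (x : ℝ) :
    ∫⁻ z in Ioc 0 1, neumannKernel f x z * h z = ∫⁻ w, f (x - w) * h w := by
  calc ∫⁻ z in Ioc 0 1, neumannKernel f x z * h z
      = ∑' n : ℤ, ∫⁻ z in Ioc 0 1, (f (x - z + 2 * n) * h z + f (x - -z + 2 * n) * h (-z)) := by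
        simp_rw [neumannKernel, ← ENNReal.tsum_mul_right, add_mul, sub_neg_eq_add, h_even]
        exact lintegral_tsum fun n => by fun_prop
    _ = ∑' n : ℤ, ∫⁻ z in Ioc (-1) 1, f (x - z + 2 * n) * h z := by
        refine tsum_congr fun n => ?_
        exact (setLIntegral_Ioc_neg_self_eq_setLIntegral_Ioc_zero (by fun_prop) zero_le_one).symm
    _ = ∑' n : ℤ, ∫⁻ z in Ioc (-1) (-1 + 2), f (x - (z + n * 2)) * h (z + n * 2) := by
        rw [← (Equiv.neg ℤ).tsum_eq]
        refine tsum_congr fun n => ?_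
        rw [show (-1 : ℝ) + 2 = 1 by norm_num]
        refine setLIntegral_congr_fun measurableSet_Ioc fun z _ => ?_
        rw [h_per.int_mul n z]
        congr 2
        simp only [Equiv.neg_apply, Int.cast_neg]
        ring
    _ = ∫⁻ w, f (x - w) * h w :=
        (lintegral_eq_tsum_setLIntegral_Ioc_add_mul two_pos (-1) fun w => f (x - w) * h w).symm

theorem lintegral_mul_neumannKernel (hf : Measurable f) (hg : Measurable g) (x y : ℝ) :
    ∫⁻ w, f (x - w) * neumannKernel g w y = neumannKernel (f ⋆ₗ g) x y := by
  have h_meas : ∀ c : ℝ, Measurable fun w => f (x - w) * g (w + c) :=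
    fun c => (hf.comp (by fun_prop)).mul (hg.comp (by fun_prop))
  have h_conv : ∀ c : ℝ, ∫⁻ w, f (x - w) * g (w + c) = (f ⋆ₗ g) (x + c) := fun c => by
    rw [lconvolution_def, ← lintegral_sub_left_eq_self _ x]
    congr with w
    ring_nf
  simp_rw [neumannKernel, ← ENNReal.tsum_mul_left, mul_add, sub_eq_add_neg _ y, add_assoc]
  rw [lintegral_tsum fun n => by fun_prop]
  refine tsum_congr fun n => ?_
  rw [lintegral_add_left (h_meas _), h_conv, h_conv]

theorem setLIntegral_Ioc_mul_neumannKernel (hf : Measurable f) (hg : Measurable g)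
    (hg_even : ∀ x, g (-x) = g x) (x y : ℝ) :
    ∫⁻ z in Ioc 0 1, neumannKernel f x z * neumannKernel g z y = neumannKernel (f ⋆ₗ g) x y := by
  rw [setLIntegral_Ioc_mul hf (measurable_left hg y) (fun z => neg_left hg_even z y)
    (periodic_left g y), lintegral_mul_neumannKernel hf hg]

end neumannKernel

theorem gaussD_eq_gaussianPDFReal {t : ℝ} (ht : 0 ≤ t) :
    gaussD t = gaussianPDFReal 0 t.toNNReal := by
  ext x
  rw [gaussD, gaussianPDFReal, Real.coe_toNNReal t ht, sub_zero, Real.sqrt_eq_rpow,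
    ← Real.rpow_neg (by positivity), neg_div]

theorem heatK_nonneg {t : ℝ} (ht : 0 ≤ t) (x y : ℝ) : 0 ≤ heatK t x y := by
  rw [heatK, gaussD_eq_gaussianPDFReal ht]
  exact tsum_nonneg fun n =>
    add_nonneg (gaussianPDFReal_nonneg _ _ _) (gaussianPDFReal_nonneg _ _ _)

theorem ofReal_heatK {t : ℝ} (ht : 0 < t) (x y : ℝ) :
    ENNReal.ofReal (heatK t x y) = neumannKernel (gaussianPDF 0 t.toNNReal) x y := by
  have hv : t.toNNReal ≠ 0 := by simpa using ht
  rw [heatK, gaussD_eq_gaussianPDFReal ht.le, ENNReal.ofReal_tsum_of_nonneg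
    (fun n => add_nonneg (gaussianPDFReal_nonneg _ _ _) (gaussianPDFReal_nonneg _ _ _))
    ((summable_gaussianPDFReal_add_mul_intCast 0 hv _ two_ne_zero).add
      (summable_gaussianPDFReal_add_mul_intCast 0 hv _ two_ne_zero))]
  exact tsum_congr fun n => ENNReal.ofReal_add (gaussianPDFReal_nonneg _ _ _)
    (gaussianPDFReal_nonneg _ _ _)

theorem heatK_eq_toReal_neumannKernel {t : ℝ} (ht : 0 < t) (x y : ℝ) :
    heatK t x y = (neumannKernel (gaussianPDF 0 t.toNNReal) x y).toReal := by
  rw [← ofReal_heatK ht, ENNReal.toReal_ofReal (heatK_nonneg ht.le x y)]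

theorem neumannKernel_gaussianPDF_lt_top {t : ℝ} (ht : 0 < t) (x y : ℝ) :
    neumannKernel (gaussianPDF 0 t.toNNReal) x y < ∞ := by
  rw [← ofReal_heatK ht]
  exact ENNReal.ofReal_lt_top

theorem setLIntegral_Ioc_neumannKernel_gaussianPDF {s t : ℝ} (hs : 0 < s) (ht : 0 < t)
    (x y : ℝ) :
    ∫⁻ z in Ioc 0 1, neumannKernel (gaussianPDF 0 s.toNNReal) x z *
      neumannKernel (gaussianPDF 0 t.toNNReal) z y =
        neumannKernel (gaussianPDF 0 (s + t).toNNReal) x y := by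
  rw [neumannKernel.setLIntegral_Ioc_mul_neumannKernel (measurable_gaussianPDF 0 _)
    (measurable_gaussianPDF 0 _) (gaussianPDF_zero_neg _),
    gaussianPDF_lconvolution_gaussianPDF _ _ (by simpa using hs) (by simpa using ht), add_zero,
    Real.toNNReal_add hs.le ht.le]

/-- Chapman–Kolmogorov equation for the Neumann heat kernel. -/
theorem heatK_chapman_kolmogorov :
    ∀ s > (0:ℝ), ∀ t > (0:ℝ), ∀ x ∈ Set.Icc (0:ℝ) 1, ∀ y ∈ Set.Icc (0:ℝ) 1,
      ∫ z in (0:ℝ)..1, heatK s x z * heatK t z y = heatK (s + t) x y := by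
  intro s hs t ht x _ y _
  have h_meas : Measurable fun z => neumannKernel (gaussianPDF 0 s.toNNReal) x z *
      neumannKernel (gaussianPDF 0 t.toNNReal) z y :=
    (neumannKernel.measurable_right (measurable_gaussianPDF 0 _) x).mul
      (neumannKernel.measurable_left (measurable_gaussianPDF 0 _) y)
  have h_lt_top : ∀ z, neumannKernel (gaussianPDF 0 s.toNNReal) x z *
      neumannKernel (gaussianPDF 0 t.toNNReal) z y < ∞ := fun z =>
    ENNReal.mul_lt_top (neumannKernel_gaussianPDF_lt_top hs x z)
      (neumannKernel_gaussianPDF_lt_top ht z y)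
  simp_rw [heatK_eq_toReal_neumannKernel hs, heatK_eq_toReal_neumannKernel ht,
    heatK_eq_toReal_neumannKernel (add_pos hs ht), ← ENNReal.toReal_mul]
  rw [intervalIntegral.integral_of_le zero_le_one,
    integral_toReal h_meas.aemeasurable (ae_of_all _ h_lt_top),
    setLIntegral_Ioc_neumannKernel_gaussianPDF hs ht]
end

section
/- There exists a constant C > 0 such that for every t ∈ (0,1] and all x, y ∈ [0,1], p(t,x,y) ≤ C t^{-1/2} exp(−(x−y)²/(4t)) (Gaussian upper bound for the Neumann heat kernel). -/
open MeasureTheory Real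

/-!
Every image point `±y + 2n` of `y` lies at distance at least `|x - y|` from `x`, and at distance
at least of order `|n|` once `|n| ≥ 2`. Splitting the exponent of each Gaussian term evenly
between these two lower bounds, and using `t ≤ 1` to drop the `1 / t` in front of the
`n`-dependent half, bounds the `n`-th term by `t ^ (-1/2) * exp (-(x - y) ^ 2 / (4 t))` times a
summable Gaussian weight in `n`.
-/

lemma summable_int_exp_neg_mul_sq {c : ℝ} (hc : 0 < c) :
    Summable fun n : ℤ => exp (-c * (n : ℝ) ^ 2) := by
  have h : Summable fun n : ℕ => exp (-c * (n : ℝ) ^ 2) :=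
    summable_exp_nat_mul_of_ge (neg_neg_of_pos hc) fun i => by
      exact_mod_cast Nat.le_self_pow two_ne_zero i
  exact .of_nat_of_neg (by simpa using h) (by simpa using h)

lemma gaussD_nonneg {t : ℝ} (ht : 0 ≤ t) (x : ℝ) : 0 ≤ gaussD t x :=
  mul_nonneg (rpow_nonneg (by positivity) _) (exp_pos _).le

lemma sq_sub_le_sq_sub_add_two_mul_int {x y : ℝ} (hx : x ∈ Set.Icc (0:ℝ) 1)
    (hy : y ∈ Set.Icc (0:ℝ) 1) (n : ℤ) : (x - y) ^ 2 ≤ (x - y + 2 * n) ^ 2 := by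
  obtain ⟨hx0, hx1⟩ := hx
  obtain ⟨hy0, hy1⟩ := hy
  obtain hn | rfl | hn := lt_trichotomy n 0
  · have hn : (n : ℝ) ≤ -1 := by exact_mod_cast Int.le_sub_one_of_lt hn
    nlinarith [mul_nonneg_of_nonpos_of_nonpos (by linarith : (n : ℝ) ≤ 0)
      (by linarith : x - y + n ≤ 0)]
  · simp
  · have hn : (1 : ℝ) ≤ n := by exact_mod_cast hn
    nlinarith [mul_nonneg (by linarith : (0 : ℝ) ≤ n) (by linarith : 0 ≤ x - y + n)]

lemma sq_sub_le_sq_add_add_two_mul_int {x y : ℝ} (hx : x ∈ Set.Icc (0:ℝ) 1)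
    (hy : y ∈ Set.Icc (0:ℝ) 1) (n : ℤ) : (x - y) ^ 2 ≤ (x + y + 2 * n) ^ 2 := by
  obtain ⟨hx0, hx1⟩ := hx
  obtain ⟨hy0, hy1⟩ := hy
  rcases lt_or_ge n 0 with hn | hn
  · have hn : (n : ℝ) ≤ -1 := by exact_mod_cast Int.le_sub_one_of_lt hn
    nlinarith [mul_nonneg_of_nonpos_of_nonpos (by linarith : x + n ≤ 0)
      (by linarith : y + n ≤ 0)]
  · have hn : (0 : ℝ) ≤ n := by exact_mod_cast hn
    nlinarith [mul_nonneg (by linarith : 0 ≤ x + n) (by linarith : 0 ≤ y + n)]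

lemma sub_two_le_sq_add_two_mul {w : ℝ} (hw : w ^ 2 ≤ 4) (s : ℝ) : s ^ 2 - 2 ≤ (w + 2 * s) ^ 2 := by
  nlinarith [sq_nonneg (3 * s + 2 * w)]

lemma gaussD_le_of_le_sq {t u a s : ℝ} (ht : 0 < t) (ht1 : t ≤ 1) (ha : a ≤ u ^ 2)
    (hs : s ^ 2 - 2 ≤ u ^ 2) :
    gaussD t u ≤ exp (1 / 2) * exp (-(1 / 4) * s ^ 2) * (t ^ (-(1:ℝ)/2) * exp (-a / (4 * t))) := by
  have hprefactor : (2 * π * t) ^ (-(1:ℝ)/2) ≤ t ^ (-(1:ℝ)/2) :=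
    rpow_le_rpow_of_nonpos ht (by nlinarith [pi_gt_three]) (by norm_num)
  set m := max (s ^ 2 - 2) 0
  have hm : 0 ≤ m := le_max_right _ _
  have hexponent : -u ^ 2 / (2 * t) ≤ -a / (4 * t) + (1 / 2 - 1 / 4 * s ^ 2) :=
    calc -u ^ 2 / (2 * t) ≤ -a / (4 * t) - m / (4 * t) := by
          rw [div_sub_div_same, div_le_div_iff₀ (by positivity) (by positivity)]
          nlinarith [max_le hs (sq_nonneg u)]
      _ ≤ -a / (4 * t) - m / 4 := by
          gcongr
          linarith
      _ ≤ -a / (4 * t) + (1 / 2 - 1 / 4 * s ^ 2) := by linarith [le_max_left (s ^ 2 - 2) 0]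
  calc gaussD t u ≤ t ^ (-(1:ℝ)/2) * exp (-a / (4 * t) + (1 / 2 - 1 / 4 * s ^ 2)) :=
        mul_le_mul hprefactor (exp_le_exp.mpr hexponent) (exp_pos _).le (rpow_nonneg ht.le _)
    _ = _ := by rw [exp_add, ← exp_add (1 / 2)]; ring_nf

lemma heatK_term_le {t x y : ℝ} (ht : 0 < t) (ht1 : t ≤ 1) (hx : x ∈ Set.Icc (0:ℝ) 1)
    (hy : y ∈ Set.Icc (0:ℝ) 1) (n : ℤ) :
    gaussD t (x - y + 2 * n) + gaussD t (x + y + 2 * n) ≤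
      2 * exp (1 / 2) * exp (-(1 / 4) * (n : ℝ) ^ 2) *
        (t ^ (-(1:ℝ)/2) * exp (-(x - y) ^ 2 / (4 * t))) := by
  have hsub := gaussD_le_of_le_sq ht ht1 (sq_sub_le_sq_sub_add_two_mul_int hx hy n)
    (sub_two_le_sq_add_two_mul (w := x - y) (by nlinarith [hx.1, hx.2, hy.1, hy.2]) n)
  have hadd := gaussD_le_of_le_sq ht ht1 (sq_sub_le_sq_add_add_two_mul_int hx hy n)
    (sub_two_le_sq_add_two_mul (w := x + y) (by nlinarith [hx.1, hx.2, hy.1, hy.2]) n)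
  linarith

/-- Gaussian upper bound for the Neumann heat kernel. -/
theorem heatK_gaussian_upper_bound :
    ∃ C > (0:ℝ), ∀ t ∈ Set.Ioc (0:ℝ) 1, ∀ x ∈ Set.Icc (0:ℝ) 1, ∀ y ∈ Set.Icc (0:ℝ) 1,
      heatK t x y ≤ C * t ^ (-(1:ℝ)/2) * Real.exp (-(x - y) ^ 2 / (4 * t)) := by
  have hweight := summable_int_exp_neg_mul_sq (c := 1 / 4) (by norm_num)
  have hweight_pos : 0 < ∑' n : ℤ, exp (-(1 / 4) * (n : ℝ) ^ 2) :=
    hweight.tsum_pos (fun _ => (exp_pos _).le) 0 (exp_pos _)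
  refine ⟨2 * exp (1 / 2) * ∑' n : ℤ, exp (-(1 / 4) * (n : ℝ) ^ 2), by positivity, ?_⟩
  rintro t ⟨ht, ht1⟩ x hx y hy
  have hterm := heatK_term_le ht ht1 hx hy
  have hbound : Summable fun n : ℤ => 2 * exp (1 / 2) * exp (-(1 / 4) * (n : ℝ) ^ 2) *
      (t ^ (-(1:ℝ)/2) * exp (-(x - y) ^ 2 / (4 * t))) :=
    (hweight.mul_left _).mul_right _
  have hsummable := hbound.of_nonneg_of_le
    (fun n => add_nonneg (gaussD_nonneg ht.le _) (gaussD_nonneg ht.le _)) hterm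
  calc heatK t x y ≤ _ := hsummable.tsum_le_tsum hterm hbound
    _ = _ := by rw [tsum_mul_right, tsum_mul_left]; ring
end
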